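/- arXiv:1702.06590 — 2 statements merged into one kernel-verified Lean document; each statement's English description precedes it below -/
import Mathlib

section
/- Let F be a field (or commutative ring), k ≥ 1, c ≥ 0 integers, and A_1, ..., A_k, A_*, L ∈ F with ∏_{i=1}^k A_i = L^c · A_*, and assume 1 - A_i is invertible for each i and 1 - A_* is invertible. Then ∏_{i=1}^k A_i/(1 - A_i) = (A_*/(1 - A_*)) · ( L^c · ( 1 + Σ_{∅ ≠ G ⊊ {1,...,k}} ∏_{g∈G} A_g/(1 - A_g) ) + (L^c - 1) · ∏_{i=1}^k A_i/(1 - A_i) ). -/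
theorem finaleq3 {F : Type*} [Field F] (k : ℕ) (hk : 1 ≤ k) (c : ℕ)
    (A : Fin k → F) (Astar L : F) (h : ∏ i, A i = L ^ c * Astar)
    (hA : ∀ i, 1 - A i ≠ 0) (hAstar : 1 - Astar ≠ 0) :
    ∏ i, A i / (1 - A i) =
      (Astar / (1 - Astar)) *
        (L ^ c * (1 + ∑ G ∈ (Finset.univ : Finset (Finset (Fin k))).filter
              (fun G => G ≠ ∅ ∧ G ≠ Finset.univ),
            ∏ g ∈ G, A g / (1 - A g))
          + (L ^ c - 1) * ∏ i, A i / (1 - A i)) := by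
  set B : Fin k → F := fun i => A i / (1 - A i) with hB
  set S : F := ∑ G ∈ (Finset.univ : Finset (Finset (Fin k))).filter
      (fun G => G ≠ ∅ ∧ G ≠ Finset.univ), ∏ g ∈ G, B g with hS
  set P : F := ∏ i, B i with hP
  have hprod : ∏ i, (B i + 1) = (∏ i, (1 - A i))⁻¹ := by
    rw [← Finset.prod_inv_distrib]
    refine Finset.prod_congr rfl fun i _ => ?_
    rw [hB, div_add_one (hA i)]
    ring
  have hexp : ∏ i, (B i + 1) = ∑ G : Finset (Fin k), ∏ g ∈ G, B g := by
    rw [Finset.prod_add]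
    simp [Finset.powerset_univ]
  have hne : (∅ : Finset (Fin k)) ≠ Finset.univ := by
    intro hcon
    have : (0:ℕ) = k := by simpa using congrArg Finset.card hcon
    omega
  have hsplit : ∑ G : Finset (Fin k), ∏ g ∈ G, B g = 1 + S + P := by
    have h1 : ∑ G : Finset (Fin k), ∏ g ∈ G, B g
        = (∏ g ∈ (∅ : Finset (Fin k)), B g)
          + ∑ G ∈ Finset.univ.erase ∅, ∏ g ∈ G, B g := by
      exact (Finset.add_sum_erase _ _ (Finset.mem_univ _)).symm
    have h2 : ∑ G ∈ Finset.univ.erase (∅ : Finset (Fin k)), ∏ g ∈ G, B g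
        = (∏ g ∈ (Finset.univ : Finset (Fin k)), B g)
          + ∑ G ∈ (Finset.univ.erase ∅).erase Finset.univ, ∏ g ∈ G, B g := by
      exact (Finset.add_sum_erase _ _
        (Finset.mem_erase.mpr ⟨Ne.symm hne, Finset.mem_univ _⟩)).symm
    have h3 : (Finset.univ.erase (∅ : Finset (Fin k))).erase Finset.univ
        = (Finset.univ : Finset (Finset (Fin k))).filter
            (fun G => G ≠ ∅ ∧ G ≠ Finset.univ) := by
      ext G
      simp [Finset.mem_erase, and_comm]
    rw [h1, h2, h3]
    simp [hS, hP]
    ring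
  have hprodne : ∏ i, (1 - A i) ≠ 0 := Finset.prod_ne_zero_iff.mpr fun i _ => hA i
  have hPval : P = (L ^ c * Astar) * (∏ i, (1 - A i))⁻¹ := by
    rw [hP, hB]
    rw [Finset.prod_div_distrib, div_eq_mul_inv, h]
  have key : P = L ^ c * Astar * (1 + S + P) := by
    rw [← hsplit, ← hexp, hprod, hPval]
  rw [div_mul_eq_mul_div, eq_div_iff hAstar]
  linear_combination key
end

section
/- For natural numbers r and k with 1 ≤ k ≤ r + 1, the following identity holds in the polynomial ring ℤ[x]: Σ_{i=0}^{r} x^i = Σ_{l=0}^{k-1} (k choose l) · x^{r-k+1} · (x - 1)^{k-l-1} + Σ_{i=0}^{r-k} x^i (where the second sum is empty if k = r + 1). -/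
open Polynomial Finset in
lemma aux_choose_sum (k : ℕ) :
    ∑ l ∈ Finset.range k, (k.choose l : ℤ[X]) * (X - 1) ^ (k - l - 1) =
      ∑ j ∈ Finset.range k, X ^ j := by
  have hX : (X - 1 : ℤ[X]) ≠ 0 := by
    simpa using X_sub_C_ne_zero (1 : ℤ)
  apply mul_right_cancel₀ hX
  rw [geom_sum_mul, Finset.sum_mul]
  have key : ∑ l ∈ Finset.range (k + 1), (k.choose l : ℤ[X]) * (X - 1) ^ (k - l) = X ^ k := by
    have := add_pow (X - 1 : ℤ[X]) 1 k
    simp only [sub_add_cancel, one_pow, mul_one] at this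
    rw [this, ← Finset.sum_range_reflect]
    apply Finset.sum_congr rfl
    intro l hl
    rw [Finset.mem_range] at hl
    have h1 : k + 1 - 1 - l = k - l := by omega
    rw [h1, Nat.choose_symm (by omega : l ≤ k), Nat.sub_sub_self (by omega : l ≤ k)]
    ring
  have : ∀ l ∈ Finset.range k,
      (k.choose l : ℤ[X]) * (X - 1) ^ (k - l - 1) * (X - 1) =
      (k.choose l : ℤ[X]) * (X - 1) ^ (k - l) := by
    intro l hl
    rw [Finset.mem_range] at hl
    rw [mul_assoc, ← pow_succ]
    congr 2
    omega
  rw [Finset.sum_congr rfl this]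
  have := key
  rw [Finset.sum_range_succ] at this
  simp only [Nat.choose_self, Nat.cast_one, Nat.sub_self, pow_zero, mul_one, one_mul] at this
  linear_combination this

open Polynomial in
theorem exceptional_divisor_stratification (r k : ℕ) (hk1 : 1 ≤ k) (hk2 : k ≤ r + 1) :
    ∑ i ∈ Finset.range (r + 1), (X : ℤ[X]) ^ i =
      (∑ l ∈ Finset.range k, (k.choose l : ℤ[X]) * X ^ (r + 1 - k) * (X - 1) ^ (k - l - 1))
        + ∑ i ∈ Finset.range (r + 1 - k), X ^ i := by
  set m := r + 1 - k with hm
  have hrk : r + 1 = m + k := by omega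
  have h1 : ∑ l ∈ Finset.range k, (k.choose l : ℤ[X]) * X ^ m * (X - 1) ^ (k - l - 1)
      = X ^ m * ∑ l ∈ Finset.range k, (k.choose l : ℤ[X]) * (X - 1) ^ (k - l - 1) := by
    rw [Finset.mul_sum]
    apply Finset.sum_congr rfl
    intros; ring
  rw [h1, aux_choose_sum, hrk, Finset.sum_range_add, add_comm, Finset.mul_sum]
  congr 1
  apply Finset.sum_congr rfl
  intros; rw [← pow_add]
end
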